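/- arXiv:0907.2299 — 2 statements merged into one kernel-verified Lean document; each statement's English description precedes it below -/
import Mathlib

section
/- For any finite word w over an alphabet and any infinite sequence of finite words v_n with |v_n| → ∞, the limit superior of the relative frequency fr(w, v_n) is at most 1/p(w), where p(w) is the minimal periodic factor length of w. -/
open Set Filter Topology List

noncomputable section

abbrev I01 : Set ℝ := Set.Icc 0 1

abbrev CI := C(I01, ℝ)

/-- Evaluate `f ∈ C([0,1])` at a real number (via projection onto `[0,1]`;
for `x ∈ [0,1]` this is just `f x`). -/
def evalI (f : CI) (x : ℝ) : ℝ := f (Set.projIcc 0 1 (by norm_num) x)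

/-- The list of gaps between consecutive points. -/
def gaps (l : List ℝ) : List ℝ := List.zipWith (fun a b => b - a) l l.tail

/-- Maximal resolution (maximal gap). -/
def maxGap (l : List ℝ) : ℝ := (gaps l).foldr max 0

/-- Minimal resolution (minimal gap). -/
def minGap (l : List ℝ) : ℝ := (gaps l).foldr min 1

def intDiffs (l : List ℤ) : List ℤ := List.zipWith (fun a b => b - a) l l.tail

/-- Quantitative code of `f` with respect to the discretization `X` and step `h`. -/
def Qcode (f : CI) (X : List ℝ) (h : ℝ) : List ℤ :=
  intDiffs (X.map fun x => ⌊evalI f x / h⌋)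

/-- Qualitative code: the signs of the quantitative code. -/
def qcode (f : CI) (X : List ℝ) (h : ℝ) : List ℤ := (Qcode f X h).map Int.sign

/-- Stretched code: each positive entry `z` of the quantitative code becomes `z` ones
followed by a zero, each negative entry `z` becomes `|z|` minus-ones followed by a zero,
and each zero entry a single zero. -/
def scode (f : CI) (X : List ℝ) (h : ℝ) : List ℤ :=
  (Qcode f X h).flatMap fun z =>
    if 0 < z then List.replicate z.toNat 1 ++ [0]
    else if z < 0 then List.replicate (-z).toNat (-1) ++ [0]
    else [0]

/-- Number of occurrences of the word `w` in the word `v`. -/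
def oc {A : Type*} [DecidableEq A] (w v : List A) : ℕ :=
  ((List.range (v.length - w.length + 1)).filter
    fun j => (v.drop j).take w.length = w).length

/-- Relative frequency of the word `w` in the word `v`. -/
def freq {A : Type*} [DecidableEq A] (w v : List A) : ℝ := (oc w v : ℝ) / v.length

/-- Minimal periodic factor length of `w`. -/
def pmin {A : Type*} [DecidableEq A] (w : List A) : ℕ :=
  sInf {s : ℕ | 0 < s ∧ ∃ u : List A, u.length = s ∧ oc w (w ++ u) = 2}

/-- A discretization system of `[0,1]`. -/
structure DiscretizationSystem where
  X : ℕ → List ℝ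
  sorted : ∀ n, (X n).Chain' (· < ·)
  mem_Icc : ∀ n, ∀ x ∈ X n, x ∈ I01
  head_eq : ∀ n, (X n).head? = some 0
  last_eq : ∀ n, (X n).getLast? = some 1
  nested : ∀ n, ∀ x ∈ X n, x ∈ X (n + 1)
  maxres_to_zero : Tendsto (fun n => maxGap (X n)) atTop (nhds 0)

/-!
Two occurrences of `w` at positions `j < j'` of a word force `w` to overlap itself with shift
`j' - j`, and the least such shift is a shift `s` with `oc w (w ++ u) = 2` for some `|u| = s`.
Hence distinct occurrences lie at least `p(w)` apart, `oc w v ≤ |v| / p(w) + 1`, and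
`fr(w, v) ≤ 1 / p(w) + 1 / |v|`, whose right-hand side tends to `1 / p(w)`.
-/

section Overlaps

variable {A : Type*}

def overlapShifts (w : List A) : Set ℕ :=
  {s | 0 < s ∧ ∃ u : List A, u.length = s ∧ (w ++ u).drop s = w}

theorem overlapShifts_nonempty [Nonempty A] (w : List A) : (overlapShifts w).Nonempty := by
  rcases eq_or_ne w [] with rfl | hw
  · exact ⟨1, one_pos, [Classical.arbitrary A], rfl, rfl⟩
  · exact ⟨w.length, length_pos_iff.2 hw, w, rfl, drop_left⟩

theorem mem_overlapShifts_of_take_eq {w x : List A} {d : ℕ} (hd : 0 < d)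
    (hlen : w.length + d ≤ x.length) (hx : x.take w.length = w)
    (hxd : (x.drop d).take w.length = w) : d ∈ overlapShifts w := by
  refine ⟨hd, (x.drop w.length).take d, by simp only [length_take, length_drop]; omega, ?_⟩
  rw [show w ++ (x.drop w.length).take d = x.take (w.length + d) by rw [take_add, hx],
    drop_take, Nat.add_sub_cancel, hxd]

variable [DecidableEq A]

def occurrences (w v : List A) : Finset ℕ :=
  (Finset.range (v.length - w.length + 1)).filter fun j => (v.drop j).take w.length = w

theorem oc_eq_card_occurrences (w v : List A) :
    oc w v = (occurrences w v).card :=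
  rfl

theorem mem_occurrences {w v : List A} {j : ℕ} :
    j ∈ occurrences w v ↔ j + w.length ≤ v.length ∧ (v.drop j).take w.length = w := by
  simp only [occurrences, Finset.mem_filter, Finset.mem_range]
  constructor
  · rintro ⟨hj, h⟩
    refine ⟨?_, h⟩
    have := congrArg length h
    simp only [length_take, length_drop] at this
    omega
  · rintro ⟨hj, h⟩
    exact ⟨by omega, h⟩

theorem sub_mem_overlapShifts {w v : List A} {j j' : ℕ}
    (hj : j ∈ occurrences w v) (hj' : j' ∈ occurrences w v) (hlt : j < j') :
    j' - j ∈ overlapShifts w := by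
  rw [mem_occurrences] at hj hj'
  refine mem_overlapShifts_of_take_eq (x := v.drop j) (by omega)
    (by rw [length_drop]; omega) hj.2 ?_
  rw [drop_drop, Nat.add_sub_cancel' hlt.le]
  exact hj'.2

theorem occurrences_append_eq_pair {w u : List A}
    (hmin : ∀ t ∈ overlapShifts w, u.length ≤ t)
    (hdrop : (w ++ u).drop u.length = w) :
    occurrences w (w ++ u) = {0, u.length} := by
  ext j
  simp only [mem_occurrences, length_append, Finset.mem_insert, Finset.mem_singleton]
  constructor
  · rintro ⟨hj, h⟩
    by_contra! hne
    have := hmin j (mem_overlapShifts_of_take_eq (Nat.pos_of_ne_zero hne.1)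
      (by rw [length_append]; omega) (by simp) h)
    omega
  · rintro (rfl | rfl)
    · simp
    · exact ⟨by omega, by rw [hdrop, take_length]⟩

theorem pmin_pos_and_le_sInf_overlapShifts [Nonempty A] (w : List A) :
    0 < pmin w ∧ pmin w ≤ sInf (overlapShifts w) := by
  obtain ⟨hs, u, hu, hdrop⟩ := Nat.sInf_mem (overlapShifts_nonempty w)
  have hoc : oc w (w ++ u) = 2 := by
    rw [← hu] at hs hdrop
    rw [oc_eq_card_occurrences, occurrences_append_eq_pair
      (fun t ht => hu ▸ Nat.sInf_le ht) hdrop, Finset.card_pair hs.ne]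
  have hmem : sInf (overlapShifts w) ∈
      {s : ℕ | 0 < s ∧ ∃ u : List A, u.length = s ∧ oc w (w ++ u) = 2} := ⟨hs, u, hu, hoc⟩
  exact ⟨(Nat.sInf_mem ⟨_, hmem⟩).1, Nat.sInf_le hmem⟩

theorem pmin_le_sub_of_mem_occurrences [Nonempty A] {w v : List A} {j j' : ℕ}
    (hj : j ∈ occurrences w v) (hj' : j' ∈ occurrences w v) (hlt : j < j') :
    pmin w ≤ j' - j :=
  (pmin_pos_and_le_sInf_overlapShifts w).2.trans (Nat.sInf_le (sub_mem_overlapShifts hj hj' hlt))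

/-- Occurrences are `p(w)`-separated, so `j ↦ j / p(w)` is injective on them. -/
theorem oc_le [Nonempty A] (w v : List A) : oc w v ≤ v.length / pmin w + 1 := by
  have hp := (pmin_pos_and_le_sInf_overlapShifts w).1
  have hlt_div : ∀ ⦃j j'⦄, j ∈ occurrences w v → j' ∈ occurrences w v → j < j' →
      j / pmin w < j' / pmin w := fun j j' hj hj' hlt => by
    have := pmin_le_sub_of_mem_occurrences hj hj' hlt
    calc j / pmin w < (j + pmin w) / pmin w := by rw [Nat.add_div_right _ hp]; omega
      _ ≤ j' / pmin w := Nat.div_le_div_right (by omega)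
  rw [oc_eq_card_occurrences, ← Finset.card_range (v.length / pmin w + 1)]
  refine Finset.card_le_card_of_injOn (· / pmin w) (fun j hj => ?_) (fun j hj j' hj' h => ?_)
  · have := (mem_occurrences.1 hj).1
    simpa [Nat.lt_succ_iff] using Nat.div_le_div_right (c := pmin w) (by omega : j ≤ v.length)
  · rcases lt_trichotomy j j' with hlt | rfl | hlt
    · exact absurd h (hlt_div hj hj' hlt).ne
    · rfl
    · exact absurd h (hlt_div hj' hj hlt).ne'

theorem freq_le [Nonempty A] (w v : List A) :
    freq w v ≤ 1 / (pmin w : ℝ) + 1 / (v.length : ℝ) := by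
  rcases Nat.eq_zero_or_pos v.length with hv | hv
  · simp [freq, hv]
  rw [freq, div_le_iff₀ (by exact_mod_cast hv)]
  calc (oc w v : ℝ) ≤ ((v.length / pmin w : ℕ) : ℝ) + 1 := by exact_mod_cast oc_le w v
    _ ≤ (v.length : ℝ) / pmin w + 1 := by gcongr; exact Nat.cast_div_le
    _ = (1 / (pmin w : ℝ) + 1 / (v.length : ℝ)) * v.length := by field_simp

end Overlaps

/-- the limsup of the relative frequency of `w` in any sequence of
words of length tending to infinity is at most `1 / p(w)`. -/
theorem stmt2 {A : Type*} [DecidableEq A] (w : List A) (v : ℕ → List A)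
    (hv : Tendsto (fun n => (v n).length) atTop atTop) :
    Filter.limsup (fun n => freq w (v n)) atTop ≤ 1 / (pmin w : ℝ) := by
  obtain ⟨N, hN⟩ := (hv.eventually_ge_atTop 1).exists
  have : Nonempty A := ⟨(v N).head (ne_nil_of_length_pos hN)⟩
  have hbound : Tendsto (fun n => 1 / (pmin w : ℝ) + 1 / ((v n).length : ℝ)) atTop
      (𝓝 (1 / (pmin w : ℝ))) := by
    simpa using (tendsto_const_nhds (x := 1 / (pmin w : ℝ))).add
      (tendsto_one_div_atTop_nhds_zero_nat.comp hv)
  have hcobdd : IsCoboundedUnder (· ≤ ·) atTop (fun n => freq w (v n)) :=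
    isBoundedUnder_of ⟨0, fun n => by unfold freq; positivity⟩ |>.isCoboundedUnder_le
  calc Filter.limsup (fun n => freq w (v n)) atTop
      ≤ Filter.limsup (fun n => 1 / (pmin w : ℝ) + 1 / ((v n).length : ℝ)) atTop :=
        limsup_le_limsup (Eventually.of_forall fun n => freq_le w (v n)) hcobdd
          hbound.isBoundedUnder_le
    _ = 1 / (pmin w : ℝ) := hbound.limsup_eq
end
end

section
/- Let (X_n) be a discretization system of [0,1]. For a residual set of f ∈ C([0,1]), there exist infinitely many n such that |f(x_{i+1}^n) − f(x_i^n)| > h_n for all consecutive points x_i^n, x_{i+1}^n of X_n; consequently the qualitative code q(f,n) contains no symbol 0 for infinitely many n. -/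
open Set Filter Topology List

noncomputable section

/-!
For each `n`, the functions whose increments along `X_n` all exceed the minimal gap `h_n` form
an open set `S_n`, so it suffices (Baire) that every tail union `⋃_{n ≥ N} S_n` is dense. Given
`g` and `ε`, add `c φ` to `g` with `c < ε`, where `φ` is a Tietze extension of the alternating
signs `(-1)^i` from the nodes `x_i^n` to `[0,1]` with `|φ| ≤ 1`. Once `H_n` is below the modulus
of uniform continuity of `g` for `c / 2` and below `c`, every increment of `g + c φ` along `X_n`
is at least `2c - c/2 > H_n ≥ h_n`. An increment larger than `h_n` changes `⌊f / h_n⌋`, so the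
qualitative code of such `f` has no zero.
-/

namespace List

variable {α β : Type*}

theorem isChain_mem_zipWith_tail (f : α → α → β) :
    ∀ l : List α, l.IsChain fun a b => f a b ∈ zipWith f l l.tail
  | [] | [_] => by simp
  | a :: b :: l => isChain_cons_cons.2
      ⟨by simp, (isChain_mem_zipWith_tail f (b :: l)).imp fun _ _ h => by simp_all⟩

theorem IsChain.forall_mem_zipWith_tail {R : α → α → Prop} {P : β → Prop} {f : α → α → β}
    (hf : ∀ a b, R a b → P (f a b)) : ∀ {l : List α}, l.IsChain R → ∀ z ∈ zipWith f l l.tail, P z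
  | [], _ | [_], _ => by simp
  | a :: b :: l, hl => by
    rw [isChain_cons_cons] at hl
    simpa using ⟨hf a b hl.1, hl.2.forall_mem_zipWith_tail hf⟩

theorem lt_foldr_min [LinearOrder α] {a b : α} (hb : a < b) :
    ∀ {l : List α}, (∀ x ∈ l, a < x) → a < l.foldr min b
  | [], _ => hb
  | _ :: _, hl =>
    lt_min (hl _ mem_cons_self) (lt_foldr_min hb fun x hx => hl x (mem_cons_of_mem _ hx))

end List

theorem isOpen_setOf_isChain {X α : Type*} [TopologicalSpace X] {R : X → α → α → Prop}
    (hR : ∀ a b, IsOpen {x | R x a b}) : ∀ l : List α, IsOpen {x | l.IsChain (R x)}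
  | [] | [_] => by simp
  | a :: b :: l => by
    simp only [isChain_cons_cons, ofPred_and]
    exact (hR a b).inter (isOpen_setOf_isChain hR (b :: l))

theorem setOf_frequently_mem_residual {X : Type*} [TopologicalSpace X] {S : ℕ → Set X}
    (hS : ∀ n, IsOpen (S n))
    (hdense : ∀ U, IsOpen U → U.Nonempty → ∃ᶠ n in atTop, (U ∩ S n).Nonempty) :
    {x | ∃ᶠ n in atTop, x ∈ S n} ∈ residual X := by
  have hiInter : {x | ∃ᶠ n in atTop, x ∈ S n} = ⋂ N, ⋃ n ≥ N, S n := by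
    ext; simp [frequently_atTop]
  rw [hiInter, countable_iInter_mem]
  refine fun N => residual_of_dense_open (isOpen_biUnion fun n _ => hS n) ?_
  refine dense_iff_inter_open.2 fun U hU hne => ?_
  obtain ⟨n, hn, x, hxU, hxS⟩ := frequently_atTop.1 (hdense U hU hne) N
  exact ⟨x, hxU, mem_biUnion hn hxS⟩

theorem exists_continuousMap_getElem_eq_neg_one_pow {X : Type*} [TopologicalSpace X]
    [NormalSpace X] [T1Space X] {L : List X} (hL : L.Nodup) :
    ∃ φ : C(X, ℝ), (∀ x, φ x ∈ Icc (-1) 1) ∧ ∀ i (hi : i < L.length), φ L[i] = (-1) ^ i := by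
  classical
  have hfin : {x | x ∈ L}.Finite := L.finite_toSet
  have : Finite {x | x ∈ L} := hfin.to_subtype
  let signs : C({x | x ∈ L}, ℝ) := ⟨fun x => (-1) ^ L.idxOf x.1, continuous_of_discreteTopology⟩
  have hsigns : ∀ x, signs x ∈ Icc (-1) 1 := fun x => by
    rcases neg_one_pow_eq_or ℝ (L.idxOf x.1) with h | h <;> simp [signs, h]
  obtain ⟨φ, hφ, hφL⟩ :=
    signs.exists_restrict_eq_forall_mem_of_closed hsigns ⟨0, by simp⟩ hfin.isClosed
  exact ⟨φ, hφ, fun i hi => (DFunLike.congr_fun hφL ⟨L[i], getElem_mem hi⟩).trans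
    (congrArg ((-1 : ℝ) ^ ·) (hL.idxOf_getElem i hi))⟩

theorem isChain_minGap_le_sub (l : List ℝ) : l.IsChain fun a b => minGap l ≤ b - a :=
  (isChain_mem_zipWith_tail _ l).imp fun _ _ h => List.min_le_of_le' 1 h le_rfl

theorem isChain_sub_le_maxGap (l : List ℝ) : l.IsChain fun a b => b - a ≤ maxGap l :=
  (isChain_mem_zipWith_tail _ l).imp fun _ _ h => List.le_max_of_le' 0 h le_rfl

theorem minGap_pos {l : List ℝ} (hl : l.IsChain (· < ·)) : 0 < minGap l :=
  lt_foldr_min one_pos (hl.forall_mem_zipWith_tail fun _ _ h => sub_pos.2 h)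

theorem uniformContinuous_evalI (f : CI) : UniformContinuous (evalI f) :=
  (CompactSpace.uniformContinuous_of_continuous f.continuous).comp
    (LipschitzWith.projIcc _).uniformContinuous

theorem floor_div_ne_floor_div {h a b : ℝ} (hh : 0 < h) (hab : h < |b - a|) :
    ⌊a / h⌋ ≠ ⌊b / h⌋ := fun he => by
  have := Int.abs_sub_lt_one_of_floor_eq_floor he.symm
  rw [← sub_div, abs_div, abs_of_pos hh, div_lt_one hh] at this
  linarith

theorem zero_notMem_qcode {f : CI} {X : List ℝ} {h : ℝ} (hh : 0 < h)
    (hX : X.IsChain fun a b => h < |evalI f b - evalI f a|) : (0 : ℤ) ∉ qcode f X h := by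
  have hfloor : (X.map fun x => ⌊evalI f x / h⌋).IsChain (· ≠ ·) :=
    (isChain_map _).2 (hX.imp fun _ _ hab => floor_div_ne_floor_div hh hab)
  simp only [qcode, Qcode, intDiffs, List.mem_map, Int.sign_eq_zero_iff_zero, exists_eq_right]
  exact fun hz => hfloor.forall_mem_zipWith_tail (P := (· ≠ 0))
    (fun _ _ hab => sub_ne_zero.2 hab.symm) 0 hz rfl

theorem isOpen_setOf_isChain_lt_abs_evalI_sub (X : List ℝ) (h : ℝ) :
    IsOpen {f : CI | X.IsChain fun a b => h < |evalI f b - evalI f a|} :=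
  isOpen_setOf_isChain (fun _ _ => isOpen_lt continuous_const
    ((continuous_eval_const _).sub (continuous_eval_const _)).abs) X

theorem exists_dist_lt_isChain_minGap_lt_abs_evalI_sub (g : CI) {ε : ℝ} (hε : 0 < ε) :
    ∃ η > 0, ∀ L : List ℝ, L.IsChain (· < ·) → (∀ x ∈ L, x ∈ I01) → maxGap L < η →
      ∃ F : CI, dist F g < ε ∧ L.IsChain fun a b => minGap L < |evalI F b - evalI F a| := by
  set c := ε / 2 with hc
  obtain ⟨δ, hδ, hgδ⟩ :=
    Metric.uniformContinuous_iff.1 (uniformContinuous_evalI g) (c / 2) (by positivity)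
  refine ⟨min δ c, by positivity, fun L hL hLI hmax => ?_⟩
  obtain ⟨φ, hφ, hφL⟩ := exists_continuousMap_getElem_eq_neg_one_pow hL.pairwise.nodup
  set F : CI := g + c • φ.restrict I01
  have hF : ∀ x ∈ I01, evalI F x = evalI g x + c * φ x := fun x hx => by
    simp [F, evalI, projIcc_of_mem _ hx]
  refine ⟨F, ?_, isChain_iff_getElem.2 fun i hi => ?_⟩
  · have hφ1 : ‖φ.restrict I01‖ ≤ 1 :=
      (ContinuousMap.norm_le _ zero_le_one).2 fun x => abs_le.2 (hφ x)
    calc dist F g = c * ‖φ.restrict I01‖ := by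
          rw [dist_self_add_left, norm_smul, Real.norm_of_nonneg (by positivity)]
      _ ≤ c * 1 := by gcongr
      _ < ε := by linarith
  · have hgap_lt : L[i + 1] - L[i] < min δ c := lt_of_le_of_lt
      (isChain_iff_getElem.1 (isChain_sub_le_maxGap L) i hi) hmax
    have hmin_le : minGap L ≤ L[i + 1] - L[i] :=
      isChain_iff_getElem.1 (isChain_minGap_le_sub L) i hi
    have hpos : 0 < L[i + 1] - L[i] := sub_pos.2 (isChain_iff_getElem.1 hL i hi)
    have hg : |evalI g L[i + 1] - evalI g L[i]| < c / 2 := by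
      have := @hgδ L[i + 1] L[i]
        (by rw [Real.dist_eq, abs_of_pos hpos]; exact hgap_lt.trans_le (min_le_left _ _))
      rwa [Real.dist_eq] at this
    have hg' := abs_lt.1 hg
    have hc_lt : minGap L < c := hmin_le.trans_lt (hgap_lt.trans_le (min_le_right _ _))
    rw [hF _ (hLI _ (getElem_mem _)), hF _ (hLI _ (getElem_mem _)), hφL, hφL, pow_succ]
    rcases neg_one_pow_eq_or ℝ i with hsign | hsign <;> rw [hsign] <;> refine lt_abs.2 ?_
    · exact Or.inr (by linarith)
    · exact Or.inl (by linarith)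

/-- for a residual set of `f`, infinitely often all consecutive
increments of `f` along `X_n` exceed `h_n`, and consequently infinitely often the
qualitative code contains no `0`. -/
theorem stmt8 (D : DiscretizationSystem) :
    {f : CI |
      (∃ᶠ n in atTop, (D.X n).Chain'
        fun a b => minGap (D.X n) < |evalI f b - evalI f a|) ∧
      (∃ᶠ n in atTop, (0 : ℤ) ∉ qcode f (D.X n) (minGap (D.X n)))} ∈
      residual CI := by
  have hsteep := setOf_frequently_mem_residual
    (S := fun n =>
      {f : CI | (D.X n).IsChain fun a b => minGap (D.X n) < |evalI f b - evalI f a|})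
    (fun n => isOpen_setOf_isChain_lt_abs_evalI_sub _ _) fun U hU ⟨g, hg⟩ => by
      obtain ⟨ε, hε, hball⟩ := Metric.isOpen_iff.1 hU g hg
      obtain ⟨η, hη, hperturb⟩ := exists_dist_lt_isChain_minGap_lt_abs_evalI_sub g hε
      refine (D.maxres_to_zero.eventually_lt_const hη).frequently.mono fun n hn => ?_
      obtain ⟨F, hFg, hF⟩ := hperturb _ (D.sorted n) (D.mem_Icc n) hn
      exact ⟨F, hball (Metric.mem_ball.2 hFg), hF⟩
  exact mem_of_superset hsteep fun f hf =>
    ⟨hf, hf.mono fun n hn => zero_notMem_qcode (minGap_pos (D.sorted n)) hn⟩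
end
end
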